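/- Let A ⊆ ℕ be a recursively enumerable set that is not computable, enumerated without repetitions by a total computable injective function a : ℕ → ℕ with range A, let ν(j) = μn[a(n) = j] be the waiting-time function, and define β : ℕ → ℕ by β(J) = max{ν(j) : j < J and j ∈ A}, with max ∅ = 0. Then β majorizes every computable function infinitely often: for every total computable function f : ℕ → ℕ, the set {J ∈ ℕ : f(J) < β(J)} is infinite. -/

import Mathlib

/-- The waiting-time function `ν(j) = μn[a(n) = j]`: the unbounded `μ`-search
(`Nat.rfind`) for the least `n` with `a n = j`. -/
def nu (a : ℕ → ℕ) (j : ℕ) : Part ℕ :=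
  Nat.rfind fun n => Part.some (decide (a n = j))

open Classical in
/-- `β(J) = max {ν(j) : j < J ∧ j ∈ A}`, with the convention `max ∅ = 0`
(note `Finset.sup` over `ℕ` takes value `0` on the empty set). -/
noncomputable def beta (a : ℕ → ℕ) (A : Set ℕ) (J : ℕ) : ℕ :=
  (Finset.range J).sup fun j => if j ∈ A then (nu a j).getOrElse 0 else 0

/-!
If `f J < β J` held for only finitely many `J`, say for none beyond `N`, then every `j ∈ A` would
be enumerated by stage `β (max (j + 1) (N + 1)) ≤ f (max (j + 1) (N + 1))`. Running the
enumeration for that many steps would then decide membership in `A`.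
-/

theorem computablePred_mem_range_of_bounded {α : Type*} [Primcodable α] [DecidableEq α]
    {a : ℕ → α} {g : α → ℕ} (ha : Computable a) (hg : Computable g)
    (hbound : ∀ j ∈ Set.range a, ∃ n < g j, a n = j) :
    ComputablePred (· ∈ Set.range a) := by
  -- a search that always halts by stage `g j`, and halts earlier exactly when `j` is enumerated
  have hhalts : ∀ j, ∃ n, g j ≤ n ∨ a n = j := fun j => ⟨g j, .inl le_rfl⟩
  have hstage : Computable fun j => Nat.find (hhalts j) := by
    refine Computable.find (Computable.computablePred ?_) hhalts
    refine (Primrec.or.to_comp.comp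
      (Primrec.nat_le.decide.to_comp.comp (hg.comp .fst) .snd)
      (Primrec.eq.decide.to_comp.comp (ha.comp .snd) .fst)).of_eq fun x => ?_
    simp
  have hmem : ∀ j, j ∈ Set.range a ↔ a (Nat.find (hhalts j)) = j := by
    refine fun j => ⟨fun hj => ?_, fun h => ⟨_, h⟩⟩
    obtain ⟨n, hn, hanj⟩ := hbound j hj
    have hlt : Nat.find (hhalts j) < g j := (Nat.find_le (.inr hanj)).trans_lt hn
    exact (Nat.find_spec (hhalts j)).resolve_left hlt.not_ge
  exact (Computable.computablePred
    (Primrec.eq.decide.to_comp.comp (ha.comp hstage) .id)).of_eq fun j => (hmem j).symm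

theorem exists_mem_nu {a : ℕ → ℕ} {j : ℕ} (hj : j ∈ Set.range a) : ∃ n ∈ nu a j, a n = j := by
  obtain ⟨m, hm⟩ := hj
  have hdom : (nu a j).Dom := Nat.rfind_dom.2 ⟨m, by simp [hm], fun _ => trivial⟩
  obtain ⟨n, hn⟩ := Part.dom_iff_mem.1 hdom
  exact ⟨n, hn, by simpa using Nat.rfind_spec hn⟩

theorem le_beta_of_mem_nu {a : ℕ → ℕ} {A : Set ℕ} {j J n : ℕ} (hn : n ∈ nu a j) (hj : j ∈ A)
    (hJ : j < J) : n ≤ beta a A J := by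
  classical
  calc n = if j ∈ A then (nu a j).getOrElse 0 else 0 := by
        rw [if_pos hj, Part.getOrElse_of_dom _ (Part.dom_iff_mem.2 ⟨_, hn⟩), Part.get_eq_of_mem hn]
    _ ≤ beta a A J := Finset.le_sup (f := fun j => if j ∈ A then (nu a j).getOrElse 0 else 0)
        (Finset.mem_range.2 hJ)

theorem beta_majorizes_computable_infinitely_often_general (A : Set ℕ) (a : ℕ → ℕ)
    (ha : Computable a) (hrange : Set.range a = A)
    (hnc : ¬ ComputablePred (· ∈ A)) :
    ∀ f : ℕ → ℕ, Computable f → {J : ℕ | f J < beta a A J}.Infinite := by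
  intro f hf hfin
  obtain ⟨N, hN⟩ := hfin.bddAbove
  have hbeta_le : ∀ J, N < J → beta a A J ≤ f J := fun J hJ =>
    not_lt.1 fun hlt => (hN hlt).not_gt hJ
  subst hrange
  refine hnc (computablePred_mem_range_of_bounded (g := fun j => f (max (j + 1) (N + 1)) + 1) ha
    (Computable.succ.comp (hf.comp (Primrec.nat_max.to_comp.comp .succ (.const _)))) ?_)
  intro j hj
  obtain ⟨n, hn, hanj⟩ := exists_mem_nu hj
  exact ⟨n, Nat.lt_succ_of_le ((le_beta_of_mem_nu hn hj (by omega)).trans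
    (hbeta_le _ (by omega))), hanj⟩

/-- If `A` is r.e. but not computable, enumerated without
repetitions by the total computable injective `a` with range `A`, then `β`
majorizes every computable function infinitely often: for every total
computable `f : ℕ → ℕ`, the set `{J : f J < β J}` is infinite. -/
theorem beta_majorizes_computable_infinitely_often (A : Set ℕ) (a : ℕ → ℕ)
    (ha : Computable a) (hinj : Function.Injective a)
    (hrange : Set.range a = A) (hre : REPred (· ∈ A))
    (hnc : ¬ ComputablePred (· ∈ A)) :
    ∀ f : ℕ → ℕ, Computable f → {J : ℕ | f J < beta a A J}.Infinite :=
  beta_majorizes_computable_infinitely_often_general A a ha hrange hnc
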